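/- Let (u_p, u_e) be a solution of the bulk system with F u_p(0)^{3/2} − E u_e(0)^{3/2} < 0 and B u_e(0)^{3/2} − A u_p(0)^{3/2} < 0, and suppose one of the two densities is strictly increasing at some point of its domain of positivity. Then the other density vanishes at some finite radius R₁ (it is positive on [0, R₁) and tends to 0 at R₁), and the increasing density remains bounded on [0, R₁]; in particular the increasing density neither develops a singularity on the other density's support nor do both densities stay positive on all of [0, ∞). -/

import Mathlib

/-!
Suppose `u_p' > 0` at `R₀` (the other case is symmetric). The flux `r² u_p'` vanishes at `0`
and has derivative `r² (F u_p^{3/2} - E u_e^{3/2})`, so this source term, negative at `0`,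
becomes positive before `R₀`. Its sign is that of `w = F^{2/3} u_p - E^{2/3} u_e`, a linear
combination of the densities whose radial Laplacian is nonnegative wherever `w ≥ 0` (there
`B u_e^{3/2} ≤ A u_p^{3/2}` because `BF ≤ EA`). A maximum-principle argument on the flux `r² w'`
then shows that once `w` is positive and increasing it stays positive. Hence `r² u_p'` keeps
growing, `u_p` increases beyond `R₀`, and `(r² u_e')' ≤ -c r²` with `c > 0`, which drives `u_e`
to zero in finite radius. The radius `R₁` is the supremum of the radii up to which both
densities are positive.
-/

open Set Filter
open scoped Topology

noncomputable section

/-- `(u_p, u_e)` is a solution of the bulk system wherever both densities are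
positive: both functions are `C²` on `[0,∞)`, have vanishing derivative at `0`, and
the equations hold at every `r > 0` such that both densities are positive on `[0,r]`. -/
def IsBulkSolWhilePos (A B E F : ℝ) (up ue : ℝ → ℝ) : Prop :=
  ContDiffOn ℝ 2 up (Ici 0) ∧ ContDiffOn ℝ 2 ue (Ici 0) ∧
  derivWithin up (Ici 0) 0 = 0 ∧ derivWithin ue (Ici 0) 0 = 0 ∧
  ∀ r : ℝ, 0 < r → (∀ s ∈ Icc 0 r, 0 < up s ∧ 0 < ue s) →
    derivWithin (derivWithin up (Ici 0)) (Ici 0) r + 2 / r * derivWithin up (Ici 0) r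
      = F * up r ^ ((3:ℝ)/2) - E * ue r ^ ((3:ℝ)/2) ∧
    derivWithin (derivWithin ue (Ici 0)) (Ici 0) r + 2 / r * derivWithin ue (Ici 0) r
      = B * ue r ^ ((3:ℝ)/2) - A * up r ^ ((3:ℝ)/2)

theorem monotoneOn_Icc_of_hasDerivAt {f f' : ℝ → ℝ} {a b : ℝ}
    (hf : ∀ x ∈ Icc a b, HasDerivAt f (f' x) x) (hf' : ∀ x ∈ Ioo a b, 0 ≤ f' x) :
    MonotoneOn f (Icc a b) :=
  monotoneOn_of_hasDerivWithinAt_nonneg (convex_Icc a b)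
    (fun x hx => (hf x hx).continuousAt.continuousWithinAt)
    (by simpa only [interior_Icc] using
      fun x hx => (hf x (Ioo_subset_Icc_self hx)).hasDerivWithinAt)
    (by simpa only [interior_Icc] using hf')

theorem antitoneOn_Icc_of_hasDerivAt {f f' : ℝ → ℝ} {a b : ℝ}
    (hf : ∀ x ∈ Icc a b, HasDerivAt f (f' x) x) (hf' : ∀ x ∈ Ioo a b, f' x ≤ 0) :
    AntitoneOn f (Icc a b) :=
  antitoneOn_of_hasDerivWithinAt_nonpos (convex_Icc a b)
    (fun x hx => (hf x hx).continuousAt.continuousWithinAt)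
    (by simpa only [interior_Icc] using
      fun x hx => (hf x (Ioo_subset_Icc_self hx)).hasDerivWithinAt)
    (by simpa only [interior_Icc] using hf')

theorem ContinuousOn.exists_first_nonpos {f : ℝ → ℝ} {a b : ℝ}
    (hf : ContinuousOn f (Icc a b))
    (ha : 0 < f a) {x : ℝ} (hx : x ∈ Icc a b) (hfx : f x ≤ 0) :
    ∃ u ∈ Ioc a b, f u ≤ 0 ∧ ∀ y ∈ Ico a u, 0 < f y := by
  set Z := Icc a b ∩ f ⁻¹' Iic 0
  have hZ : IsClosed Z := hf.preimage_isClosed_of_isClosed isClosed_Icc isClosed_Iic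
  have hZbdd : BddBelow Z := ⟨a, fun y hy => hy.1.1⟩
  obtain ⟨⟨hau, hub⟩, hfu⟩ := hZ.csInf_mem ⟨x, hx, hfx⟩ hZbdd
  refine ⟨sInf Z, ⟨lt_of_le_of_ne hau ?_, hub⟩, hfu, fun y hy => ?_⟩
  · intro h
    rw [← h] at hfu
    exact hfu.not_gt ha
  · by_contra! hfy
    exact hy.2.not_ge (csInf_le hZbdd ⟨⟨hy.1, hy.2.le.trans hub⟩, hfy⟩)

theorem ContinuousOn.exists_last_nonpos {f : ℝ → ℝ} {a b : ℝ}
    (hf : ContinuousOn f (Icc a b))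
    (ha : f a ≤ 0) (hab : a ≤ b) (hb : 0 < f b) :
    ∃ s ∈ Ico a b, f s ≤ 0 ∧ ∀ y ∈ Ioc s b, 0 < f y := by
  set Z := Icc a b ∩ f ⁻¹' Iic 0
  have hZ : IsClosed Z := hf.preimage_isClosed_of_isClosed isClosed_Icc isClosed_Iic
  have hZbdd : BddAbove Z := ⟨b, fun y hy => hy.1.2⟩
  obtain ⟨⟨has, hsb⟩, hfs⟩ := hZ.csSup_mem ⟨a, ⟨le_rfl, hab⟩, ha⟩ hZbdd
  refine ⟨sSup Z, ⟨has, lt_of_le_of_ne hsb ?_⟩, hfs, fun y hy => ?_⟩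
  · intro h
    rw [h] at hfs
    exact hfs.not_gt hb
  · by_contra! hfy
    exact hy.1.not_ge (le_csSup hZbdd ⟨⟨has.trans hy.1.le, hy.2⟩, hfy⟩)

theorem exists_pos_and_deriv_pos {f f' : ℝ → ℝ} {a b : ℝ} (hab : a < b)
    (hf : ContinuousOn f (Icc a b)) (hf' : ∀ x ∈ Ioo a b, HasDerivAt f (f' x) x)
    (ha : f a ≤ 0) (hb : 0 < f b) : ∃ x ∈ Ioo a b, 0 < f x ∧ 0 < f' x := by
  obtain ⟨s, ⟨has, hsb⟩, hfs, hpos⟩ := hf.exists_last_nonpos ha hab.le hb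
  obtain ⟨x, hx, hslope⟩ := exists_hasDerivAt_eq_slope f f' hsb
    (hf.mono (Icc_subset_Icc_left has))
    (fun x hx => hf' x ⟨has.trans_lt hx.1, hx.2⟩)
  refine ⟨x, ⟨has.trans_lt hx.1, hx.2⟩, hpos x ⟨hx.1, hx.2.le⟩, ?_⟩
  rw [hslope]
  exact div_pos (by linarith) (sub_pos.2 hsb)

/-- Up to the first zero of `W`, the flux `x² W'` is nondecreasing, hence nonnegative, so `W` does
not decrease there. -/
theorem pos_of_radial_flux_deriv_nonneg {W W' R' : ℝ → ℝ} {a b : ℝ} (ha : 0 < a)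
    (hW : ∀ x ∈ Icc a b, HasDerivAt W (W' x) x)
    (hR : ∀ x ∈ Icc a b, HasDerivAt (fun y => y ^ 2 * W' y) (R' x) x)
    (hR' : ∀ x ∈ Icc a b, 0 < W x → 0 ≤ R' x)
    (hWa : 0 < W a) (hW'a : 0 ≤ W' a) : ∀ x ∈ Icc a b, 0 < W x := by
  intro x hx
  by_contra! hWx
  obtain ⟨u, ⟨hau, hub⟩, hWu, hpos⟩ := ContinuousOn.exists_first_nonpos
    (fun y hy => (hW y hy).continuousAt.continuousWithinAt) hWa hx hWx
  have hsub : Icc a u ⊆ Icc a b := Icc_subset_Icc_right hub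
  have hflux : MonotoneOn (fun y => y ^ 2 * W' y) (Icc a u) :=
    monotoneOn_Icc_of_hasDerivAt (fun y hy => hR y (hsub hy))
      (fun y hy => hR' y (hsub (Ioo_subset_Icc_self hy)) (hpos y ⟨hy.1.le, hy.2⟩))
  have hmono : MonotoneOn W (Icc a u) := by
    refine monotoneOn_Icc_of_hasDerivAt (fun y hy => hW y (hsub hy)) fun y hy => ?_
    have := hflux (left_mem_Icc.2 hau.le) (Ioo_subset_Icc_self hy) hy.1.le
    exact nonneg_of_mul_nonneg_right ((mul_nonneg (sq_nonneg a) hW'a).trans this)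
      (pow_pos (ha.trans hy.1) 2)
  exact hWu.not_gt
    (hWa.trans_le (hmono (left_mem_Icc.2 hau.le) (right_mem_Icc.2 hau.le) hau.le))

/-- Comparison with `g a + k (a⁻¹ - x⁻¹) - c (x² - a²) / 6`, the solution of `(x² h')' = -c x²`
with the same value and flux as `g` at `a`. -/
theorem le_of_radial_flux_deriv_le {g g' q : ℝ → ℝ} {a t c : ℝ} (ha : 0 < a) (hat : a ≤ t)
    (hg : ∀ x ∈ Icc a t, HasDerivAt g (g' x) x)
    (hq : ∀ x ∈ Icc a t, HasDerivAt (fun y => y ^ 2 * g' y) (q x) x)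
    (hqc : ∀ x ∈ Icc a t, q x ≤ -c * x ^ 2) :
    g t ≤ g a + (a ^ 2 * g' a + c * a ^ 3 / 3) * (a⁻¹ - t⁻¹) - c * (t ^ 2 - a ^ 2) / 6 := by
  set k := a ^ 2 * g' a + c * a ^ 3 / 3
  have hpos : ∀ x ∈ Icc a t, 0 < x := fun x hx => ha.trans_le hx.1
  have hflux : AntitoneOn (fun y => y ^ 2 * g' y + c * y ^ 3 / 3) (Icc a t) := by
    refine antitoneOn_Icc_of_hasDerivAt
      (fun x hx => (hq x hx).add (((hasDerivAt_pow 3 x).const_mul c).div_const 3))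
      fun x hx => ?_
    have := hqc x (Ioo_subset_Icc_self hx)
    norm_num
    linarith
  have hcmp :
      AntitoneOn (fun y => g y - k * (a⁻¹ - y⁻¹) + c * (y ^ 2 - a ^ 2) / 6) (Icc a t) := by
    refine antitoneOn_Icc_of_hasDerivAt
      (f' := fun x => (x ^ 2 * g' x + c * x ^ 3 / 3 - k) / x ^ 2)
      (fun x hx => (((hg x hx).sub
        (((hasDerivAt_inv (hpos x hx).ne').const_sub a⁻¹).const_mul k)).add
        ((((hasDerivAt_pow 2 x).sub_const (a ^ 2)).const_mul c).div_const 6)).congr_deriv ?_)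
      fun x hx => div_nonpos_of_nonpos_of_nonneg
        (sub_nonpos.2 (hflux (left_mem_Icc.2 hat) (Ioo_subset_Icc_self hx) hx.1.le)) (sq_nonneg x)
    field_simp [(hpos x hx).ne']
    ring
  have := hcmp (left_mem_Icc.2 hat) (right_mem_Icc.2 hat) hat
  simp only [sub_self, mul_zero, zero_div, add_zero, sub_zero] at this
  linarith

theorem rpow_two_thirds_mul_rpow_three_halves {F x : ℝ} (hF : 0 ≤ F) (hx : 0 ≤ x) :
    (F ^ ((2:ℝ)/3) * x) ^ ((3:ℝ)/2) = F * x ^ ((3:ℝ)/2) := by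
  rw [Real.mul_rpow (Real.rpow_nonneg hF _) hx, ← Real.rpow_mul hF]
  norm_num

theorem mul_rpow_three_halves_lt_iff {E F x y : ℝ} (hE : 0 ≤ E) (hF : 0 ≤ F) (hx : 0 ≤ x)
    (hy : 0 ≤ y) :
    E * y ^ ((3:ℝ)/2) < F * x ^ ((3:ℝ)/2) ↔ E ^ ((2:ℝ)/3) * y < F ^ ((2:ℝ)/3) * x := by
  rw [← rpow_two_thirds_mul_rpow_three_halves hE hy,
    ← rpow_two_thirds_mul_rpow_three_halves hF hx,
    Real.rpow_lt_rpow_iff (by positivity) (by positivity) (by norm_num)]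

theorem mul_rpow_three_halves_le_iff {E F x y : ℝ} (hE : 0 ≤ E) (hF : 0 ≤ F) (hx : 0 ≤ x)
    (hy : 0 ≤ y) :
    E * y ^ ((3:ℝ)/2) ≤ F * x ^ ((3:ℝ)/2) ↔ E ^ ((2:ℝ)/3) * y ≤ F ^ ((2:ℝ)/3) * x := by
  rw [← rpow_two_thirds_mul_rpow_three_halves hE hy,
    ← rpow_two_thirds_mul_rpow_three_halves hF hx,
    Real.rpow_le_rpow_iff (by positivity) (by positivity) (by norm_num)]

theorem mul_sub_mul_le_of_mul_le {A B E F x y : ℝ} (hB : 0 ≤ B) (hxy : E * y ≤ F * x) :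
    E * (B * y - A * x) ≤ (B * F - E * A) * x := by
  nlinarith [mul_le_mul_of_nonneg_left hxy hB]

theorem ContDiffOn.hasDerivAt_derivWithin_Ici {f : ℝ → ℝ} {n : WithTop ℕ∞} {a r : ℝ}
    (hf : ContDiffOn ℝ n f (Ici a)) (hn : n ≠ 0) (hr : a < r) :
    HasDerivAt f (derivWithin f (Ici a) r) r :=
  (hf.differentiableOn hn r hr.le).hasDerivWithinAt.hasDerivAt (Ici_mem_nhds hr)

theorem HasDerivAt.sq_mul_radial {g : ℝ → ℝ} {g' r : ℝ} (hg : HasDerivAt g g' r)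
    (hr : r ≠ 0) :
    HasDerivAt (fun x => x ^ 2 * g x) (r ^ 2 * (g' + 2 / r * g r)) r :=
  ((hasDerivAt_pow 2 r).mul hg).congr_deriv (by field_simp; ring)

def posRadii (up ue : ℝ → ℝ) : Set ℝ := {r | ∀ s ∈ Icc 0 r, 0 < up s ∧ 0 < ue s}

section posRadii

variable {up ue : ℝ → ℝ} {r s R₀ : ℝ}

theorem posRadii_comm : posRadii ue up = posRadii up ue := by
  ext r
  exact forall₂_congr fun _ _ => and_comm

theorem mem_posRadii_of_le (hrS : r ∈ posRadii up ue) (hsr : s ≤ r) : s ∈ posRadii up ue :=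
  fun x hx => hrS x ⟨hx.1, hx.2.trans hsr⟩

theorem pos_of_mem_posRadii (hrS : r ∈ posRadii up ue) (hr : 0 ≤ r) : 0 < up r ∧ 0 < ue r :=
  hrS r ⟨hr, le_rfl⟩

theorem pos_of_lt_sSup_posRadii (hne : (posRadii up ue).Nonempty)
    (hr : r ∈ Ico 0 (sSup (posRadii up ue))) : 0 < up r ∧ 0 < ue r := by
  obtain ⟨t, htS, hrt⟩ := exists_lt_of_lt_csSup hne hr.2
  exact pos_of_mem_posRadii (mem_posRadii_of_le htS hrt.le) hr.1

variable (hup : ContinuousOn up (Ici 0)) (hue : ContinuousOn ue (Ici 0))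
include hup hue

theorem exists_gt_mem_posRadii (hr : 0 ≤ r) (hrS : r ∈ posRadii up ue) :
    ∃ r' ∈ posRadii up ue, r < r' := by
  have hev : ∀ᶠ x in 𝓝[≥] r, 0 < up x ∧ 0 < ue x := by
    have hpos := pos_of_mem_posRadii hrS hr
    refine nhdsWithin_mono _ (Ici_subset_Ici.2 hr) ?_
    exact ((hup r hr).eventually (lt_mem_nhds hpos.1)).and
      ((hue r hr).eventually (lt_mem_nhds hpos.2))
  obtain ⟨u, hru, hsub⟩ := mem_nhdsGE_iff_exists_Ico_subset.1 hev
  refine ⟨(r + u) / 2, fun x hx => ?_, by linarith [mem_Ioi.1 hru]⟩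
  rcases le_or_gt x r with hxr | hrx
  · exact hrS x ⟨hx.1, hxr⟩
  · exact hsub ⟨hrx.le, by linarith [hx.2, mem_Ioi.1 hru]⟩

variable (hbdd : BddAbove (posRadii up ue)) (hR₀ : 0 ≤ R₀) (hR₀S : R₀ ∈ posRadii up ue)
include hbdd hR₀ hR₀S

theorem lt_sSup_posRadii : R₀ < sSup (posRadii up ue) := by
  obtain ⟨r', hr'S, hR₀r'⟩ := exists_gt_mem_posRadii hup hue hR₀ hR₀S
  exact hR₀r'.trans_le (le_csSup hbdd hr'S)

theorem not_pos_sSup_posRadii :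
    ¬(0 < up (sSup (posRadii up ue)) ∧ 0 < ue (sSup (posRadii up ue))) := by
  set R₁ := sSup (posRadii up ue)
  intro hR₁
  have hR₁S : R₁ ∈ posRadii up ue := fun x hx => (eq_or_lt_of_le hx.2).elim (fun h => h ▸ hR₁)
    fun h => pos_of_lt_sSup_posRadii ⟨R₀, hR₀S⟩ ⟨hx.1, h⟩
  obtain ⟨r', hr'S, hR₁r'⟩ :=
    exists_gt_mem_posRadii hup hue (hR₀.trans (lt_sSup_posRadii hup hue hbdd hR₀ hR₀S).le) hR₁S
  exact hR₁r'.not_ge (le_csSup hbdd hr'S)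

theorem tendsto_nhdsLT_sSup_posRadii (hmono : ∀ r ∈ posRadii up ue, R₀ ≤ r → up R₀ ≤ up r) :
    Tendsto ue (𝓝[<] sSup (posRadii up ue)) (𝓝 0) := by
  set R₁ := sSup (posRadii up ue)
  have hR₀R₁ : R₀ < R₁ := lt_sSup_posRadii hup hue hbdd hR₀ hR₀S
  have hR₁ : 0 < R₁ := hR₀.trans_lt hR₀R₁
  have hleft : ∀ {f : ℝ → ℝ}, ContinuousOn f (Ici 0) → Tendsto f (𝓝[<] R₁) (𝓝 (f R₁)) :=
    fun hf => (hf R₁ hR₁.le).tendsto.mono_left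
      (nhdsWithin_Ico_eq_nhdsLT hR₁ ▸ nhdsWithin_mono _ Ico_subset_Ici_self)
  have hbetween : ∀ᶠ r in 𝓝[<] R₁, R₀ ≤ r ∧ r ∈ posRadii up ue := by
    filter_upwards [Ioo_mem_nhdsLT hR₀R₁] with r hr
    exact ⟨hr.1.le, fun x hx => pos_of_lt_sSup_posRadii ⟨R₀, hR₀S⟩ ⟨hx.1, hx.2.trans_lt hr.2⟩⟩
  have hupR₁ : up R₀ ≤ up R₁ :=
    ge_of_tendsto (hleft hup) (hbetween.mono fun r hr => hmono r hr.2 hr.1)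
  have hueR₁ : 0 ≤ ue R₁ := ge_of_tendsto (hleft hue)
    (hbetween.mono fun r hr => (pos_of_mem_posRadii hr.2 (hR₀.trans hr.1)).2.le)
  have hueR₁' : ue R₁ = 0 := by
    refine hueR₁.eq_or_lt.elim Eq.symm fun h => absurd ⟨?_, h⟩
      (not_pos_sSup_posRadii hup hue hbdd hR₀ hR₀S)
    exact (pos_of_mem_posRadii hR₀S hR₀).1.trans_le hupR₁
  simpa only [hueR₁'] using hleft hue

end posRadii

/-- `(F^{2/3} u_p)^{3/2} = F u_p^{3/2}`, so `bulkBalance E F u_p u_e` has the sign of the source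
`F u_p^{3/2} - E u_e^{3/2}` while being linear in the densities. -/
def bulkBalance (E F : ℝ) (f g : ℝ → ℝ) (r : ℝ) : ℝ :=
  F ^ ((2:ℝ)/3) * f r - E ^ ((2:ℝ)/3) * g r

section bulkBalance

variable {E F r : ℝ} {up ue : ℝ → ℝ}

theorem bulkBalance_pos_iff (hE : 0 ≤ E) (hF : 0 ≤ F) (hup : 0 ≤ up r) (hue : 0 ≤ ue r) :
    0 < bulkBalance E F up ue r ↔ E * ue r ^ ((3:ℝ)/2) < F * up r ^ ((3:ℝ)/2) := by
  rw [bulkBalance, sub_pos, mul_rpow_three_halves_lt_iff hE hF hup hue]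

theorem bulkBalance_nonneg_iff (hE : 0 ≤ E) (hF : 0 ≤ F) (hup : 0 ≤ up r) (hue : 0 ≤ ue r) :
    0 ≤ bulkBalance E F up ue r ↔ E * ue r ^ ((3:ℝ)/2) ≤ F * up r ^ ((3:ℝ)/2) := by
  rw [bulkBalance, sub_nonneg, mul_rpow_three_halves_le_iff hE hF hup hue]

end bulkBalance

namespace IsBulkSolWhilePos

variable {A B E F r R₀ : ℝ} {up ue : ℝ → ℝ} (h : IsBulkSolWhilePos A B E F up ue)
include h

theorem swap : IsBulkSolWhilePos E F A B ue up :=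
  let ⟨hup, hue, hup0, hue0, hode⟩ := h
  ⟨hue, hup, hue0, hup0, fun r hr hpos => (hode r hr fun s hs => (hpos s hs).symm).symm⟩

theorem continuousOn : ContinuousOn up (Ici 0) := h.1.continuousOn

theorem continuousOn_derivWithin : ContinuousOn (derivWithin up (Ici 0)) (Ici 0) :=
  h.1.continuousOn_derivWithin (uniqueDiffOn_Ici 0) one_le_two

theorem hasDerivAt (hr : 0 < r) : HasDerivAt up (derivWithin up (Ici 0) r) r :=
  h.1.hasDerivAt_derivWithin_Ici two_ne_zero hr

theorem hasDerivAt_flux (hr : 0 < r) (hrS : r ∈ posRadii up ue) :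
    HasDerivAt (fun x => x ^ 2 * derivWithin up (Ici 0) x)
      (r ^ 2 * (F * up r ^ ((3:ℝ)/2) - E * ue r ^ ((3:ℝ)/2))) r := by
  rw [← (h.2.2.2.2 r hr hrS).1]
  exact ((h.1.derivWithin (uniqueDiffOn_Ici 0) (m := 1) (by norm_num)).hasDerivAt_derivWithin_Ici
    one_ne_zero hr).sq_mul_radial hr.ne'

theorem hasDerivAt_bulkBalance (hr : 0 < r) :
    HasDerivAt (bulkBalance E F up ue)
      (bulkBalance E F (derivWithin up (Ici 0)) (derivWithin ue (Ici 0)) r) r :=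
  ((h.hasDerivAt hr).const_mul _).sub ((h.swap.hasDerivAt hr).const_mul _)

theorem hasDerivAt_flux_bulkBalance (hr : 0 < r) (hrS : r ∈ posRadii up ue) :
    HasDerivAt
      (fun x => x ^ 2 * bulkBalance E F (derivWithin up (Ici 0)) (derivWithin ue (Ici 0)) x)
      (r ^ 2 * (F ^ ((2:ℝ)/3) * (F * up r ^ ((3:ℝ)/2) - E * ue r ^ ((3:ℝ)/2))
        - E ^ ((2:ℝ)/3) * (B * ue r ^ ((3:ℝ)/2) - A * up r ^ ((3:ℝ)/2)))) r := by
  have hfun :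
      (fun x => x ^ 2 * bulkBalance E F (derivWithin up (Ici 0)) (derivWithin ue (Ici 0)) x)
      = fun x => F ^ ((2:ℝ)/3) * (x ^ 2 * derivWithin up (Ici 0) x)
        - E ^ ((2:ℝ)/3) * (x ^ 2 * derivWithin ue (Ici 0) x) := by
    funext x
    simp only [bulkBalance]
    ring
  rw [hfun]
  exact (((h.hasDerivAt_flux hr hrS).const_mul _).sub
    ((h.swap.hasDerivAt_flux hr (posRadii_comm ▸ hrS)).const_mul _)).congr_deriv (by ring)

theorem continuousOn_bulkBalance : ContinuousOn (bulkBalance E F up ue) (Ici 0) :=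
  (continuousOn_const.mul h.continuousOn).sub (continuousOn_const.mul h.swap.continuousOn)

theorem exists_bulkBalance_pos_deriv_pos (hE : 0 ≤ E) (hF : 0 ≤ F)
    (hφ0 : F * up 0 ^ ((3:ℝ)/2) - E * ue 0 ^ ((3:ℝ)/2) < 0) (hR₀ : 0 < R₀)
    (hR₀S : R₀ ∈ posRadii up ue) (hinc : 0 < derivWithin up (Ici 0) R₀) :
    ∃ η ∈ Ioo 0 R₀, 0 < bulkBalance E F up ue η ∧
      0 < bulkBalance E F (derivWithin up (Ici 0)) (derivWithin ue (Ici 0)) η := by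
  obtain ⟨ξ, hξ, hslope⟩ :=
    exists_hasDerivAt_eq_slope (fun x => x ^ 2 * derivWithin up (Ici 0) x) _ hR₀
      (((continuousOn_pow 2).mul h.continuousOn_derivWithin).mono Icc_subset_Ici_self)
      (fun x hx => h.hasDerivAt_flux hx.1 (mem_posRadii_of_le hR₀S hx.2.le))
  have hsrc : E * ue ξ ^ ((3:ℝ)/2) < F * up ξ ^ ((3:ℝ)/2) := by
    refine sub_pos.1 (pos_of_mul_pos_right (a := ξ ^ 2) ?_ (sq_nonneg ξ))
    rw [hslope]
    simp only [zero_pow two_ne_zero, zero_mul, sub_zero]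
    positivity
  have hposξ := pos_of_mem_posRadii (mem_posRadii_of_le hR₀S hξ.2.le) hξ.1.le
  have hpos0 := pos_of_mem_posRadii (mem_posRadii_of_le hR₀S hR₀.le) le_rfl
  have hbalξ : 0 < bulkBalance E F up ue ξ :=
    (bulkBalance_pos_iff hE hF hposξ.1.le hposξ.2.le).2 hsrc
  have hbal0 : bulkBalance E F up ue 0 ≤ 0 := not_lt.1 fun hbal0 =>
    ((bulkBalance_pos_iff hE hF hpos0.1.le hpos0.2.le).1 hbal0).not_gt (sub_neg.1 hφ0)
  obtain ⟨η, hη, hbalη, hbal'η⟩ := exists_pos_and_deriv_pos hξ.1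
    (h.continuousOn_bulkBalance.mono Icc_subset_Ici_self)
    (fun x hx => h.hasDerivAt_bulkBalance hx.1) hbal0 hbalξ
  exact ⟨η, ⟨hη.1, hη.2.trans hξ.2⟩, hbalη, hbal'η⟩

theorem bulkBalance_pos_of_le {η : ℝ} (hB : 0 ≤ B) (hE : 0 < E) (hF : 0 ≤ F)
    (hD : B * F ≤ E * A) (hη : 0 < η) (hbal : 0 < bulkBalance E F up ue η)
    (hbal' : 0 ≤ bulkBalance E F (derivWithin up (Ici 0)) (derivWithin ue (Ici 0)) η)
    (hrS : r ∈ posRadii up ue) (hηr : η ≤ r) : 0 < bulkBalance E F up ue r := by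
  refine pos_of_radial_flux_deriv_nonneg hη
    (fun x hx => h.hasDerivAt_bulkBalance (hη.trans_le hx.1))
    (fun x hx => h.hasDerivAt_flux_bulkBalance (hη.trans_le hx.1) (mem_posRadii_of_le hrS hx.2))
    (fun x hx hbalx => ?_) hbal hbal' r ⟨hηr, le_rfl⟩
  have hx := pos_of_mem_posRadii (mem_posRadii_of_le hrS hx.2) (hη.le.trans hx.1)
  have hsrc : E * ue x ^ ((3:ℝ)/2) ≤ F * up x ^ ((3:ℝ)/2) :=
    (bulkBalance_nonneg_iff hE.le hF hx.1.le hx.2.le).1 hbalx.le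
  have hsrc_e : B * ue x ^ ((3:ℝ)/2) - A * up x ^ ((3:ℝ)/2) ≤ 0 := by
    refine nonpos_of_mul_nonpos_right ((mul_sub_mul_le_of_mul_le hB hsrc).trans ?_) hE
    exact mul_nonpos_of_nonpos_of_nonneg (by linarith) (Real.rpow_nonneg hx.1.le _)
  have h1 : 0 ≤ F ^ ((2:ℝ)/3) * (F * up x ^ ((3:ℝ)/2) - E * ue x ^ ((3:ℝ)/2)) :=
    mul_nonneg (by positivity) (sub_nonneg.2 hsrc)
  have h2 : E ^ ((2:ℝ)/3) * (B * ue x ^ ((3:ℝ)/2) - A * up x ^ ((3:ℝ)/2)) ≤ 0 :=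
    mul_nonpos_of_nonneg_of_nonpos (by positivity) hsrc_e
  exact mul_nonneg (sq_nonneg x) (by linarith)

theorem le_up_of_bulkBalance_nonneg {η : ℝ} (hE : 0 ≤ E) (hF : 0 ≤ F) (hη : 0 < η)
    (hηR₀ : η ≤ R₀)
    (hinc : 0 < derivWithin up (Ici 0) R₀)
    (hbal : ∀ r ∈ posRadii up ue, η ≤ r → 0 ≤ bulkBalance E F up ue r)
    (hrS : r ∈ posRadii up ue) (hR₀r : R₀ ≤ r) : up R₀ ≤ up r := by
  have hR₀ : 0 < R₀ := hη.trans_le hηR₀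
  have hflux : MonotoneOn (fun x => x ^ 2 * derivWithin up (Ici 0) x) (Icc η r) := by
    refine monotoneOn_Icc_of_hasDerivAt
      (fun x hx => h.hasDerivAt_flux (hη.trans_le hx.1) (mem_posRadii_of_le hrS hx.2))
      fun x hx => mul_nonneg (sq_nonneg x) (sub_nonneg.2 ?_)
    have hxS := mem_posRadii_of_le hrS hx.2.le
    have hpos := pos_of_mem_posRadii hxS (hη.trans hx.1).le
    exact (bulkBalance_nonneg_iff hE hF hpos.1.le hpos.2.le).1 (hbal x hxS hx.1.le)
  refine monotoneOn_Icc_of_hasDerivAt (fun x hx => h.hasDerivAt (hR₀.trans_le hx.1))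
    (fun x hx => ?_) (left_mem_Icc.2 hR₀r) (right_mem_Icc.2 hR₀r) hR₀r
  have := hflux ⟨hηR₀, hR₀r⟩ ⟨hηR₀.trans hx.1.le, hx.2.le⟩ hx.1.le
  exact nonneg_of_mul_nonneg_right ((mul_pos (pow_pos hR₀ 2) hinc).le.trans this)
    (pow_pos (hR₀.trans hx.1) 2)

theorem bddAbove_posRadii (hB : 0 ≤ B) (hE : 0 < E) (hF : 0 ≤ F) (hD : B * F < E * A)
    (hR₀ : 0 < R₀) (hR₀S : R₀ ∈ posRadii up ue)
    (hbal : ∀ r ∈ posRadii up ue, R₀ ≤ r → 0 ≤ bulkBalance E F up ue r)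
    (hmono : ∀ r ∈ posRadii up ue, R₀ ≤ r → up R₀ ≤ up r) : BddAbove (posRadii up ue) := by
  have hupR₀ := (pos_of_mem_posRadii hR₀S hR₀.le).1
  set c := (E * A - B * F) * up R₀ ^ ((3:ℝ)/2) / E
  have hc : 0 < c := div_pos (mul_pos (sub_pos.2 hD) (Real.rpow_pos_of_pos hupR₀ _)) hE
  set k := R₀ ^ 2 * derivWithin ue (Ici 0) R₀ + c * R₀ ^ 3 / 3 with hk
  set C := R₀ ^ 2 + 6 * (ue R₀ + |k| * R₀⁻¹) / c
  refine ⟨max R₀ ((C + 1) / 2), fun t htS => ?_⟩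
  rcases le_or_gt t R₀ with htR₀ | hR₀t
  · exact le_max_of_le_left htR₀
  have hsrc : ∀ x ∈ Icc R₀ t,
      x ^ 2 * (B * ue x ^ ((3:ℝ)/2) - A * up x ^ ((3:ℝ)/2)) ≤ -c * x ^ 2 := by
    intro x hx
    have hxS := mem_posRadii_of_le htS hx.2
    have hpos := pos_of_mem_posRadii hxS (hR₀.le.trans hx.1)
    have h1 := mul_sub_mul_le_of_mul_le (A := A) hB
      ((bulkBalance_nonneg_iff hE.le hF hpos.1.le hpos.2.le).1 (hbal x hxS hx.1))
    have h2 : up R₀ ^ ((3:ℝ)/2) ≤ up x ^ ((3:ℝ)/2) :=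
      Real.rpow_le_rpow hupR₀.le (hmono x hxS hx.1) (by norm_num)
    have h3 : E * (B * ue x ^ ((3:ℝ)/2) - A * up x ^ ((3:ℝ)/2)) ≤ E * -c := by
      rw [show E * -c = (B * F - E * A) * up R₀ ^ ((3:ℝ)/2) by simp only [c]; field_simp; ring]
      nlinarith
    nlinarith [le_of_mul_le_mul_left h3 hE, sq_nonneg x]
  have hcmp := le_of_radial_flux_deriv_le hR₀ hR₀t.le
    (fun x hx => h.swap.hasDerivAt (hR₀.trans_le hx.1))
    (fun x hx => h.swap.hasDerivAt_flux (hR₀.trans_le hx.1)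
      (posRadii_comm ▸ mem_posRadii_of_le htS hx.2)) hsrc
  rw [← hk] at hcmp
  have huet := (pos_of_mem_posRadii htS (hR₀.trans hR₀t).le).2
  have hkt : k * (R₀⁻¹ - t⁻¹) ≤ |k| * R₀⁻¹ :=
    calc k * (R₀⁻¹ - t⁻¹) ≤ |k| * (R₀⁻¹ - t⁻¹) :=
          mul_le_mul_of_nonneg_right (le_abs_self k) (sub_nonneg.2 (inv_anti₀ hR₀ hR₀t.le))
      _ ≤ |k| * R₀⁻¹ :=
          mul_le_mul_of_nonneg_left (sub_le_self _ (inv_nonneg.2 (hR₀.trans hR₀t).le))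
            (abs_nonneg k)
  have ht2 : t ^ 2 ≤ C := by
    rw [← sub_le_iff_le_add', le_div_iff₀ hc]
    linarith
  exact le_max_of_le_right (by nlinarith [sq_nonneg (t - 1)])

theorem bddAbove_posRadii_and_le_up (hB : 0 ≤ B) (hE : 0 < E) (hF : 0 ≤ F)
    (hD : B * F < E * A) (hφ0 : F * up 0 ^ ((3:ℝ)/2) - E * ue 0 ^ ((3:ℝ)/2) < 0) (hR₀ : 0 < R₀)
    (hR₀S : R₀ ∈ posRadii up ue) (hinc : 0 < derivWithin up (Ici 0) R₀) :
    BddAbove (posRadii up ue) ∧ ∀ r ∈ posRadii up ue, R₀ ≤ r → up R₀ ≤ up r := by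
  obtain ⟨η, hη, hbalη, hbal'η⟩ :=
    h.exists_bulkBalance_pos_deriv_pos hE.le hF hφ0 hR₀ hR₀S hinc
  have hbal : ∀ r ∈ posRadii up ue, η ≤ r → 0 ≤ bulkBalance E F up ue r := fun r hrS hηr =>
    (h.bulkBalance_pos_of_le hB hE hF hD.le hη.1 hbalη hbal'η.le hrS hηr).le
  have hmono : ∀ r ∈ posRadii up ue, R₀ ≤ r → up R₀ ≤ up r := fun r hrS hR₀r =>
    h.le_up_of_bulkBalance_nonneg hE.le hF hη.1 hη.2.le hinc hbal hrS hR₀r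
  exact ⟨h.bddAbove_posRadii hB hE hF hD hR₀ hR₀S
    (fun r hrS hR₀r => hbal r hrS (hη.2.le.trans hR₀r)) hmono, hmono⟩

end IsBulkSolWhilePos

theorem stmt16_general (A B E F : ℝ) (hA : 0 < A) (hB : 0 < B) (hE : 0 < E) (hF : 0 < F)
    (hBFEA : B * F < E * A)
    (up ue : ℝ → ℝ) (hsol : IsBulkSolWhilePos A B E F up ue)
    (hφ : F * up 0 ^ ((3:ℝ)/2) - E * ue 0 ^ ((3:ℝ)/2) < 0)
    (hψ : B * ue 0 ^ ((3:ℝ)/2) - A * up 0 ^ ((3:ℝ)/2) < 0)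
    (R₀ : ℝ) (hR₀ : 0 < R₀) (hpos : ∀ s ∈ Icc 0 R₀, 0 < up s ∧ 0 < ue s)
    (hinc : 0 < derivWithin up (Ici 0) R₀ ∨ 0 < derivWithin ue (Ici 0) R₀) :
    ∃ R₁ : ℝ, R₀ < R₁ ∧ (∀ r ∈ Ico 0 R₁, 0 < up r ∧ 0 < ue r) ∧
      (0 < derivWithin up (Ici 0) R₀ →
        Tendsto ue (nhdsWithin R₁ (Iio R₁)) (nhds 0) ∧
        ∃ M : ℝ, ∀ r ∈ Icc 0 R₁, up r ≤ M) ∧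
      (0 < derivWithin ue (Ici 0) R₀ →
        Tendsto up (nhdsWithin R₁ (Iio R₁)) (nhds 0) ∧
        ∃ M : ℝ, ∀ r ∈ Icc 0 R₁, ue r ≤ M) := by
  have hR₀S : R₀ ∈ posRadii up ue := hpos
  have hR₀S' : R₀ ∈ posRadii ue up := posRadii_comm ▸ hR₀S
  have key_p := hsol.bddAbove_posRadii_and_le_up hB.le hE hF.le hBFEA hφ hR₀ hR₀S
  have key_e := hsol.swap.bddAbove_posRadii_and_le_up hF.le hA hB.le (by linarith) hψ hR₀ hR₀S'
  rw [posRadii_comm] at key_e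
  have hbdd : BddAbove (posRadii up ue) :=
    hinc.elim (fun h => (key_p h).1) fun h => (key_e h).1
  have hup := hsol.continuousOn
  have hue := hsol.swap.continuousOn
  set R₁ := sSup (posRadii up ue)
  have hbound : ∀ f : ℝ → ℝ, ContinuousOn f (Ici 0) → ∃ M, ∀ r ∈ Icc 0 R₁, f r ≤ M :=
    fun f hf => (isCompact_Icc.bddAbove_image (hf.mono Icc_subset_Ici_self)).imp fun _ hM _ hr =>
      hM (mem_image_of_mem f hr)
  refine ⟨R₁, lt_sSup_posRadii hup hue hbdd hR₀.le hR₀S,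
    fun r hr => pos_of_lt_sSup_posRadii ⟨R₀, hR₀S⟩ hr, fun h => ⟨?_, hbound up hup⟩,
    fun h => ⟨?_, hbound ue hue⟩⟩
  · exact tendsto_nhdsLT_sSup_posRadii hup hue hbdd hR₀.le hR₀S (key_p h).2
  · have := tendsto_nhdsLT_sSup_posRadii hue hup (posRadii_comm ▸ hbdd) hR₀.le hR₀S'
      (posRadii_comm ▸ (key_e h).2)
    rwa [posRadii_comm] at this

/-- Lemma 5.8: if one density is strictly increasing somewhere on the domain of
positivity, then the other density vanishes at some finite radius `R₁` (both are
positive on `[0,R₁)` and the other tends to `0` at `R₁`), and the increasing density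
remains bounded on `[0,R₁]`. -/
theorem stmt16 (A B E F : ℝ) (hA : 0 < A) (hB : 0 < B) (hE : 0 < E) (hF : 0 < F)
    (hEF : F < E) (hAB : B < A) (hBFEA : B * F < E * A)
    (up ue : ℝ → ℝ) (hsol : IsBulkSolWhilePos A B E F up ue)
    (hp0 : 0 < up 0) (he0 : 0 < ue 0)
    (hφ : F * up 0 ^ ((3:ℝ)/2) - E * ue 0 ^ ((3:ℝ)/2) < 0)
    (hψ : B * ue 0 ^ ((3:ℝ)/2) - A * up 0 ^ ((3:ℝ)/2) < 0)
    (R₀ : ℝ) (hR₀ : 0 < R₀) (hpos : ∀ s ∈ Icc 0 R₀, 0 < up s ∧ 0 < ue s)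
    (hinc : 0 < derivWithin up (Ici 0) R₀ ∨ 0 < derivWithin ue (Ici 0) R₀) :
    ∃ R₁ : ℝ, R₀ < R₁ ∧ (∀ r ∈ Ico 0 R₁, 0 < up r ∧ 0 < ue r) ∧
      (0 < derivWithin up (Ici 0) R₀ →
        Tendsto ue (nhdsWithin R₁ (Iio R₁)) (nhds 0) ∧
        ∃ M : ℝ, ∀ r ∈ Icc 0 R₁, up r ≤ M) ∧
      (0 < derivWithin ue (Ici 0) R₀ →
        Tendsto up (nhdsWithin R₁ (Iio R₁)) (nhds 0) ∧
        ∃ M : ℝ, ∀ r ∈ Icc 0 R₁, ue r ≤ M) :=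
  stmt16_general A B E F hA hB hE hF hBFEA up ue hsol hφ hψ R₀ hR₀ hpos hinc
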